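/- For every positive integer n and integer t, ∑_{k=1}^{n} (-1)^{k-1}·(k/(n+k))·C(n+k, n-k)·L_{2k+t} equals 0 if n ≡ 0 (mod 5); equals (-1)^{⌊n/5⌋}·L_{t+2}/2 if n ≡ 1 or 4 (mod 5); and equals (-1)^{⌊n/5⌋+1}·L_{t+1}/2 if n ≡ 2 or 3 (mod 5). -/

import Mathlib

open Finset Real

/-- Fibonacci numbers extended to integer indices. -/
def fibZ (n : ℤ) : ℤ :=
  if 0 ≤ n then (Nat.fib n.toNat : ℤ)
  else (-1) ^ ((-n).toNat + 1) * (Nat.fib (-n).toNat : ℤ)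

/-- Lucas numbers on natural indices. -/
def lucasNat : ℕ → ℤ
  | 0 => 2
  | 1 => 1
  | n + 2 => lucasNat (n + 1) + lucasNat n

/-- Lucas numbers extended to integer indices. -/
def lucasZ (n : ℤ) : ℤ :=
  if 0 ≤ n then lucasNat n.toNat
  else (-1) ^ (-n).toNat * lucasNat (-n).toNat

noncomputable def gold : ℝ := (1 + Real.sqrt 5) / 2
noncomputable def gold' : ℝ := (1 - Real.sqrt 5) / 2

/-!
Since `k / (n + k) * C(n + k, n - k) = C(n + k - 1, 2k - 1) / 2`, the sum is half of
`altChooseSum L n t = ∑_{k < n} (-1)^k C(n + k, 2k + 1) L (2k + 2 + t)`. Pascal's rule gives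
`S (n + 2) t = 2 S (n + 1) t - S (n + 1) (t + 2) - S n t` for `S = altChooseSum f` and any `f`,
so `S (n + 5) = -S n` follows by induction from the cases `n = 0, 1`. For a sequence obeying the
Fibonacci recurrence those cases, and the values `S 1 = f (t + 2)`, `S 2 = S 3 = -f (t + 1)`,
`S 4 = f (t + 2)`, are short computations with the same recurrence. In operator terms `S n` is the
Chebyshev polynomial `U (n - 1)` at `1 - E² / 2`, `E` the shift; on Fibonacci sequences
`2 - E² = -E⁻¹` is a root of `X² = X + 1`, so `1 - E² / 2` acts as `cos (π / 5)` or `cos (3π / 5)`,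
where `U (n - 1) (cos θ) = sin (n θ) / sin θ`.
-/

lemma Nat.choose_second_diff (n k : ℕ) :
    (n + k + 3).choose (2 * k + 3) + (n + k + 1).choose (2 * k + 3) =
      2 * (n + k + 2).choose (2 * k + 3) + (n + k + 1).choose (2 * k + 1) := by
  have h₁ : (n + k + 3).choose (2 * k + 3) =
      (n + k + 2).choose (2 * k + 2) + (n + k + 2).choose (2 * k + 3) := Nat.choose_succ_succ' _ _
  have h₂ : (n + k + 2).choose (2 * k + 2) =
      (n + k + 1).choose (2 * k + 1) + (n + k + 1).choose (2 * k + 2) := Nat.choose_succ_succ' _ _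
  have h₃ : (n + k + 2).choose (2 * k + 3) =
      (n + k + 1).choose (2 * k + 2) + (n + k + 1).choose (2 * k + 3) := Nat.choose_succ_succ' _ _
  omega

def IsFibLike {R : Type*} [Add R] (f : ℤ → R) : Prop := ∀ s, f (s + 2) = f (s + 1) + f s

section
variable {R : Type*} [CommRing R] (f : ℤ → R)

def altChooseSum (n : ℕ) (t : ℤ) : R :=
  ∑ k ∈ range n, (-1) ^ k * ((n + k).choose (2 * k + 1) : R) * f (2 * k + 2 + t)

lemma altChooseSum_eq_sum_range {n N : ℕ} (hN : n ≤ N) (t : ℤ) :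
    altChooseSum f n t =
      ∑ k ∈ range N, (-1) ^ k * ((n + k).choose (2 * k + 1) : R) * f (2 * k + 2 + t) := by
  refine sum_subset (range_subset_range.2 hN) fun k _ hk => ?_
  rw [Nat.choose_eq_zero_of_lt (by simp at hk; omega)]
  simp

lemma altChooseSum_add_two (n : ℕ) (t : ℤ) :
    altChooseSum f (n + 2) t =
      2 * altChooseSum f (n + 1) t - altChooseSum f (n + 1) (t + 2) - altChooseSum f n t := by
  set a : ℕ → ℕ → R := fun m k =>
    (-1) ^ k * ((m + k).choose (2 * k + 1) : R) * f (2 * k + 2 + t)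
  have shifted : altChooseSum f (n + 1) (t + 2) = -∑ k ∈ range (n + 1),
      ((n + k + 1).choose (2 * k + 1) : R) * ((-1) ^ (k + 1) * f (2 * (k + 1 : ℕ) + 2 + t)) := by
    rw [altChooseSum, ← sum_neg_distrib]
    refine sum_congr rfl fun k _ => ?_
    rw [show 2 * (k : ℤ) + 2 + (t + 2) = 2 * (k + 1 : ℕ) + 2 + t by push_cast; ring]
    ring_nf
  have hsum : ∑ k ∈ range (n + 2), (a (n + 2) k - 2 * a (n + 1) k + a n k) =
      ∑ k ∈ range (n + 1),
        ((n + k + 1).choose (2 * k + 1) : R) * ((-1) ^ (k + 1) * f (2 * (k + 1 : ℕ) + 2 + t)) := by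
    rw [sum_range_succ', add_eq_left.2 (by simp [a]; ring)]
    refine sum_congr rfl fun k _ => ?_
    have h := congrArg (Nat.cast (R := R)) (Nat.choose_second_diff n k)
    push_cast at h
    simp only [a, show n + 2 + (k + 1) = n + k + 3 by ring,
      show n + 1 + (k + 1) = n + k + 2 by ring, show n + (k + 1) = n + k + 1 by ring,
      show 2 * (k + 1) + 1 = 2 * k + 3 by ring]
    linear_combination (-1) ^ (k + 1) * f (2 * (k + 1 : ℕ) + 2 + t) * h
  simp only [sum_add_distrib, sum_sub_distrib, ← mul_sum] at hsum
  rw [shifted, altChooseSum_eq_sum_range f (n := n + 1) (N := n + 2) (by omega),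
    altChooseSum_eq_sum_range f (n := n) (N := n + 2) (by omega), altChooseSum]
  linear_combination hsum

@[simp] lemma altChooseSum_zero (t : ℤ) : altChooseSum f 0 t = 0 := by simp [altChooseSum]

lemma altChooseSum_one (t : ℤ) : altChooseSum f 1 t = f (t + 2) := by
  simp [altChooseSum, add_comm]

variable {f}

lemma altChooseSum_two (hf : IsFibLike f) (t : ℤ) : altChooseSum f 2 t = -f (t + 1) := by
  rw [altChooseSum_add_two f 0, altChooseSum_one, altChooseSum_one, altChooseSum_zero]
  linear_combination (norm := ring_nf) (-1 : R) * (hf (t + 2) + hf (t + 1))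

lemma altChooseSum_three (hf : IsFibLike f) (t : ℤ) : altChooseSum f 3 t = -f (t + 1) := by
  rw [altChooseSum_add_two f 1, altChooseSum_two hf, altChooseSum_two hf, altChooseSum_one]
  linear_combination (norm := ring_nf) hf (t + 1)

lemma altChooseSum_four (hf : IsFibLike f) (t : ℤ) : altChooseSum f 4 t = f (t + 2) := by
  rw [altChooseSum_add_two f 2, altChooseSum_three hf, altChooseSum_three hf, altChooseSum_two hf]
  linear_combination (norm := ring_nf) hf (t + 1)

lemma altChooseSum_five (hf : IsFibLike f) (t : ℤ) : altChooseSum f 5 t = 0 := by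
  rw [altChooseSum_add_two f 3, altChooseSum_four hf, altChooseSum_four hf, altChooseSum_three hf]
  linear_combination (norm := ring_nf) -hf (t + 2) - hf (t + 1)

lemma altChooseSum_add_five (hf : IsFibLike f) :
    ∀ n t, altChooseSum f (n + 5) t = -altChooseSum f n t
  | 0, t => by simp [altChooseSum_five hf]
  | 1, t => by
    rw [altChooseSum_add_two f 4, altChooseSum_five hf, altChooseSum_five hf, altChooseSum_four hf,
      altChooseSum_one]
    ring
  | n + 2, t => by
    rw [show n + 2 + 5 = n + 5 + 2 by ring, altChooseSum_add_two, altChooseSum_add_five hf (n + 1),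
      altChooseSum_add_five hf (n + 1), altChooseSum_add_five hf n, altChooseSum_add_two]
    ring

lemma altChooseSum_add_mul_five (hf : IsFibLike f) (r q : ℕ) (t : ℤ) :
    altChooseSum f (r + 5 * q) t = (-1) ^ q * altChooseSum f r t := by
  induction q with
  | zero => simp
  | succ q ih => rw [mul_add_one, ← add_assoc, altChooseSum_add_five hf, ih, pow_succ]; ring

lemma altChooseSum_eq_neg_one_pow_mul_mod_five (hf : IsFibLike f) (n : ℕ) (t : ℤ) :
    altChooseSum f n t = (-1) ^ (n / 5) * altChooseSum f (n % 5) t := by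
  conv_lhs => rw [← Nat.mod_add_div n 5]
  exact altChooseSum_add_mul_five hf _ _ t

end

lemma lucasZ_natCast (m : ℕ) : lucasZ m = lucasNat m := by simp [lucasZ]

lemma lucasZ_neg_natCast (m : ℕ) : lucasZ (-m) = (-1) ^ m * lucasNat m := by
  rcases m with _ | m
  · simp [lucasZ]
  · rw [lucasZ, if_neg (by omega)]
    simp

lemma isFibLike_lucasZ : IsFibLike lucasZ := by
  intro s
  obtain ⟨m, rfl | rfl⟩ := Int.eq_nat_or_neg s
  · rw [show (m : ℤ) + 2 = (m + 2 : ℕ) by push_cast; ring,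
      show (m : ℤ) + 1 = (m + 1 : ℕ) by push_cast; ring]
    simp only [lucasZ_natCast, lucasNat]
  · match m with
    | 0 => decide
    | 1 => decide
    | m + 2 =>
      rw [show -((m + 2 : ℕ) : ℤ) + 2 = -(m : ℤ) by push_cast; ring,
        show -((m + 2 : ℕ) : ℤ) + 1 = -((m + 1 : ℕ) : ℤ) by push_cast; ring]
      simp only [lucasZ_neg_natCast, lucasNat, pow_succ]
      ring

lemma two_mul_add_two_mul_choose_sub (n i : ℕ) (hi : i < n) :
    (2 * i + 2) * (n + i + 1).choose (n - (i + 1)) = (n + i + 1) * (n + i).choose (2 * i + 1) := by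
  rw [Nat.add_one_mul_choose_eq, ← Nat.choose_symm (by omega),
    show n + i + 1 - (n - (i + 1)) = 2 * i + 2 by omega]
  ring

lemma sum_Icc_eq_altChooseSum_div_two (f : ℤ → ℝ) (n : ℕ) (t : ℤ) :
    ∑ k ∈ Icc 1 n, (-1 : ℝ) ^ (k - 1) * ((k : ℝ) / ((n : ℝ) + (k : ℝ))) *
        ((n + k).choose (n - k) : ℝ) * f (2 * k + t) = altChooseSum f n t / 2 := by
  rw [← Ico_add_one_right_eq_Icc, sum_Ico_eq_sum_range, Nat.add_sub_cancel, altChooseSum, sum_div]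
  refine sum_congr rfl fun i hi => ?_
  have h := congrArg (Nat.cast (R := ℝ)) (two_mul_add_two_mul_choose_sub n i (mem_range.1 hi))
  push_cast at h
  rw [add_comm 1 i, Nat.add_sub_cancel,
    show 2 * ((i + 1 : ℕ) : ℤ) + t = 2 * i + 2 + t by push_cast; ring]
  have hcoef :
      ((i + 1 : ℕ) : ℝ) / (n + (i + 1 : ℕ)) * ((n + (i + 1)).choose (n - (i + 1)) : ℝ) =
        (n + i).choose (2 * i + 1) / 2 := by
    rw [← add_assoc]
    field_simp
    push_cast
    linear_combination h
  linear_combination (-1) ^ i * f (2 * i + 2 + t) * hcoef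

theorem stmt16_general (n : ℕ) (t : ℤ) :
    ∑ k ∈ Finset.Icc 1 n,
        (-1 : ℝ) ^ (k - 1) * ((k : ℝ) / ((n : ℝ) + (k : ℝ))) * (Nat.choose (n + k) (n - k) : ℝ) *
          (lucasZ (2 * k + t) : ℝ) =
      if n % 5 = 0 then 0
      else if n % 5 = 1 ∨ n % 5 = 4 then (-1 : ℝ) ^ (n / 5) * (lucasZ (t + 2) : ℝ) / 2
      else (-1 : ℝ) ^ (n / 5 + 1) * (lucasZ (t + 1) : ℝ) / 2 := by
  have hL : IsFibLike (fun s => (lucasZ s : ℝ)) := fun s => by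
    simp only [isFibLike_lucasZ s, Int.cast_add]
  rw [sum_Icc_eq_altChooseSum_div_two (fun s => (lucasZ s : ℝ)),
    altChooseSum_eq_neg_one_pow_mul_mod_five hL]
  have h5 : n % 5 < 5 := Nat.mod_lt _ (by norm_num)
  interval_cases n % 5 <;>
    simp [altChooseSum_one, altChooseSum_two hL, altChooseSum_three hL, altChooseSum_four hL,
      pow_succ]

theorem stmt16 (n : ℕ) (hn : 0 < n) (t : ℤ) :
    ∑ k ∈ Finset.Icc 1 n,
        (-1 : ℝ) ^ (k - 1) * ((k : ℝ) / ((n : ℝ) + (k : ℝ))) * (Nat.choose (n + k) (n - k) : ℝ) *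
          (lucasZ (2 * k + t) : ℝ) =
      if n % 5 = 0 then 0
      else if n % 5 = 1 ∨ n % 5 = 4 then (-1 : ℝ) ^ (n / 5) * (lucasZ (t + 2) : ℝ) / 2
      else (-1 : ℝ) ^ (n / 5 + 1) * (lucasZ (t + 1) : ℝ) / 2 :=
  stmt16_general n t
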